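/- Let G be a t.d.l.c. group that is the increasing union of a countable chain of compact open subgroups O₀ ⊆ O₁ ⊆ O₂ ⊆ ⋯ (a nested group). Then cd_Q(G) ≤ 1. -/

import Mathlib

universe u

/-- A discrete `ℚ[G]`-module over a topological group `G`: a `ℚ`-vector space with
a `ℚ`-linear `G`-action in which every element has open stabilizer. -/
structure DiscGMod (G : Type u) [Group G] [TopologicalSpace G] : Type (u + 1) where
  carrier : Type u
  [acg : AddCommGroup carrier]
  [mod : Module ℚ carrier]
  [act : DistribMulAction G carrier]
  [cmm : SMulCommClass G ℚ carrier]
  discrete : ∀ m : carrier, IsOpen ((MulAction.stabilizer G m : Subgroup G) : Set G)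

attribute [instance] DiscGMod.acg DiscGMod.mod DiscGMod.act DiscGMod.cmm

/-- A morphism of discrete `ℚ[G]`-modules is a `G`-equivariant `ℚ`-linear map. -/
def DiscGMod.Equivariant {G : Type u} [Group G] [TopologicalSpace G]
    {A B : DiscGMod G} (f : A.carrier →ₗ[ℚ] B.carrier) : Prop :=
  ∀ (g : G) (a : A.carrier), f (g • a) = g • f a

/-- Projectivity, relative to the category of discrete `ℚ[G]`-modules, of a
`ℚ`-module `P` equipped with a `G`-action `σ`: every equivariant map from `P` to a
discrete module lifts along every equivariant surjection of discrete modules. -/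
def ProjOverDiscrete (G : Type u) [Group G] [TopologicalSpace G]
    (P : Type u) [AddCommGroup P] [Module ℚ P] (σ : G → P → P) : Prop :=
  ∀ (A B : DiscGMod G) (π : B.carrier →ₗ[ℚ] A.carrier),
    DiscGMod.Equivariant π → Function.Surjective π →
    ∀ φ : P →ₗ[ℚ] A.carrier, (∀ (g : G) (x : P), φ (σ g x) = g • φ x) →
    ∃ ψ : P →ₗ[ℚ] B.carrier, (∀ (g : G) (x : P), ψ (σ g x) = g • ψ x) ∧ π.comp ψ = φ

/-- `P` is projective in the category of discrete `ℚ[G]`-modules. -/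
def DiscGMod.IsProjectiveObj {G : Type u} [Group G] [TopologicalSpace G]
    (P : DiscGMod G) : Prop :=
  ProjOverDiscrete G P.carrier (fun g m => g • m)

/-!
`G` acts on the tree whose vertices at level `k` are the cosets `G ⧸ O k`, the coset `g O_k`
being joined to `g O_{k+1}`. Indexing each edge by its lower vertex, the chain complex of this
tree is `0 → ℚ[V] → ℚ[V] → ℚ → 0` with `δ_v ↦ δ_v - δ_{push v}`. The differential is injective
because `push` raises the level, and its image is the augmentation kernel because, as
`G = ⋃ O_k`, any two vertices are pushed to a common one. Both terms are permutation
modules with compact open point stabilizers, and these are projective among discrete modules: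
along an equivariant surjection a `U`-fixed vector, `U` compact, has a `U`-fixed preimage,
obtained by averaging the finite `U`-orbit of any preimage.
-/

open MulAction Finsupp

theorem finite_orbit_of_isCompact {G X : Type*} [Group G] [TopologicalSpace G]
    [IsTopologicalGroup G] [MulAction G X] {U : Subgroup G} (hU : IsCompact (U : Set G)) {x : X}
    (hx : IsOpen (stabilizer G x : Set G)) : (orbit U x).Finite := by
  have : CompactSpace U := isCompact_iff_compactSpace.mp hU
  have := (stabilizer U x).quotient_finite_of_isOpen (hx.preimage continuous_subtype_val)
  exact Set.finite_coe_iff.mp (.of_equiv _ (orbitEquivQuotientStabilizer U x).symm)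

theorem DiscGMod.exists_fixed_preimage {G : Type u} [Group G] [TopologicalSpace G]
    [IsTopologicalGroup G] {U : Subgroup G} (hU : IsCompact (U : Set G))
    {A B : DiscGMod G} {π : B.carrier →ₗ[ℚ] A.carrier} (hπ : DiscGMod.Equivariant π)
    (hsurj : Function.Surjective π) {a : A.carrier} (ha : ∀ u ∈ U, u • a = a) :
    ∃ b, π b = a ∧ ∀ u ∈ U, u • b = b := by
  obtain ⟨b₀, rfl⟩ := hsurj a
  have := (finite_orbit_of_isCompact hU (B.discrete b₀)).to_subtype
  have : Fintype (orbit U b₀) := .ofFinite _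
  have : Nonempty (orbit U b₀) := ⟨⟨b₀, mem_orbit_self b₀⟩⟩
  have hn : (Fintype.card (orbit U b₀) : ℚ) ≠ 0 := Nat.cast_ne_zero.mpr Fintype.card_ne_zero
  refine ⟨(Fintype.card (orbit U b₀) : ℚ)⁻¹ • ∑ y : orbit U b₀, (y : B.carrier), ?_, ?_⟩
  · have hπy : ∀ y : orbit U b₀, π y = π b₀ := by
      rintro ⟨_, u, rfl⟩
      exact (hπ u b₀).trans (ha u u.2)
    rw [map_smul, map_sum, Fintype.sum_congr _ _ hπy, Finset.sum_const, Finset.card_univ,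
      ← Nat.cast_smul_eq_nsmul ℚ, smul_smul, inv_mul_cancel₀ hn, one_smul]
  · intro u hu
    rw [smul_comm, Finset.smul_sum]
    congr 1
    exact Fintype.sum_equiv (MulAction.toPerm (⟨u, hu⟩ : U)) _ _ fun _ => rfl

/-- Choose `f` on orbit representatives and extend by `f (c • r) = c • f r`; the stabilizer
condition makes this independent of `c`. -/
theorem MulAction.exists_equivariant_of_forall_exists {G X Y : Type*} [Group G] [MulAction G X]
    [MulAction G Y] (R : X → Y → Prop) (hR : ∀ (g : G) x y, R x y → R (g • x) (g • y))
    (h : ∀ x, ∃ y, R x y ∧ stabilizer G x ≤ stabilizer G y) :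
    ∃ f : X → Y, (∀ x, R x (f x)) ∧ ∀ (g : G) x, f (g • x) = g • f x := by
  choose y hyR hystab using h
  let r : X → X := fun x => (Quotient.mk (orbitRel G X) x).out
  have hr : ∀ x, ∃ c : G, c • r x = x := fun x => by
    obtain ⟨c, hc⟩ := Quotient.mk_out (s := orbitRel G X) x
    exact ⟨c⁻¹, inv_smul_eq_iff.mpr hc.symm⟩
  choose c hc using hr
  refine ⟨fun x => c x • y (r x), fun x => ?_, fun g x => ?_⟩
  · simpa only [hc] using hR (c x) _ _ (hyR (r x))
  have hrg : r (g • x) = r x := congrArg Quotient.out (Quotient.sound ⟨g, rfl⟩)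
  have hmem : (g * c x)⁻¹ * c (g • x) ∈ stabilizer G (r x) := by
    rw [mem_stabilizer_iff, mul_smul, ← hrg, hc, hrg, mul_inv_rev, mul_smul, inv_smul_smul,
      inv_smul_eq_iff, hc]
  have := hystab _ hmem
  rw [mem_stabilizer_iff, mul_smul, inv_smul_eq_iff] at this
  simp only [hrg, this, mul_smul]

section PushDifference

variable (R : Type*) [Ring R] {X : Type*}

noncomputable def augmentation (X : Type*) : (X →₀ R) →ₗ[R] R :=
  linearCombination R fun _ => 1

noncomputable def pushDiff (f : X → X) : (X →₀ R) →ₗ[R] (X →₀ R) :=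
  LinearMap.id - lmapDomain R R f

variable {R}

@[simp]
theorem augmentation_single (x : X) (r : R) : augmentation R X (single x r) = r := by
  simp [augmentation]

theorem augmentation_mapDomain {Y : Type*} (f : X → Y) (m : X →₀ R) :
    augmentation R Y (mapDomain f m) = augmentation R X m := by
  simp only [augmentation, linearCombination_mapDomain]
  rfl

theorem augmentation_surjective [Nonempty X] : Function.Surjective (augmentation R X) :=
  fun r => ⟨single (Classical.arbitrary X) r, augmentation_single _ r⟩

theorem pushDiff_apply (f : X → X) (m : X →₀ R) : pushDiff R f m = m - mapDomain f m := rfl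

theorem pushDiff_single (f : X → X) (x : X) (r : R) :
    pushDiff R f (single x r) = single x r - single (f x) r := by
  rw [pushDiff_apply, mapDomain_single]

theorem augmentation_pushDiff (f : X → X) (m : X →₀ R) :
    augmentation R X (pushDiff R f m) = 0 := by
  rw [pushDiff_apply, map_sub, augmentation_mapDomain, sub_self]

/-- A point of minimal level in the support of `m` is not in the support of `mapDomain f m`. -/
theorem pushDiff_injective {f : X → X} (ℓ : X → ℕ) (hℓ : ∀ x, ℓ (f x) = ℓ x + 1) :
    Function.Injective (pushDiff R f) := by
  classical
  rw [← LinearMap.ker_eq_bot, LinearMap.ker_eq_bot']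
  intro m hm
  by_contra hne
  obtain ⟨x, hx, hmin⟩ := m.support.exists_min_image ℓ (support_nonempty_iff.mpr hne)
  rw [pushDiff_apply, sub_eq_zero] at hm
  rw [hm] at hx
  obtain ⟨w, hw, rfl⟩ := Finset.mem_image.mp (mapDomain_support hx)
  have := hmin w hw
  rw [hℓ] at this
  omega

theorem single_sub_single_iterate_mem_range (f : X → X) (x : X) (r : R) (n : ℕ) :
    single x r - single (f^[n] x) r ∈ LinearMap.range (pushDiff R f) := by
  induction n with
  | zero => simp
  | succ n ih =>
    rw [← sub_add_sub_cancel _ (single (f^[n] x) r), Function.iterate_succ_apply']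
    exact add_mem ih ⟨_, pushDiff_single f _ r⟩

theorem range_pushDiff {f : X → X} (hf : ∀ x y, ∃ m n, f^[m] x = f^[n] y) :
    LinearMap.range (pushDiff R f) = LinearMap.ker (augmentation R X) := by
  refine le_antisymm (LinearMap.range_le_ker_iff.mpr (LinearMap.ext (augmentation_pushDiff f)))
    fun m hm => ?_
  rcases isEmpty_or_nonempty X with hX | ⟨⟨x₀⟩⟩
  · simp [Subsingleton.elim m 0]
  have hsingle : ∀ x r, single x r - single x₀ r ∈ LinearMap.range (pushDiff R f) := by
    intro x r
    obtain ⟨k, n, hkn⟩ := hf x x₀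
    have := sub_mem (single_sub_single_iterate_mem_range f x r k)
      (single_sub_single_iterate_mem_range f x₀ r n)
    rwa [hkn, sub_sub_sub_cancel_right] at this
  have hmod : ∀ m : X →₀ R,
      m - single x₀ (augmentation R X m) ∈ LinearMap.range (pushDiff R f) := by
    intro m
    induction m using Finsupp.induction_linear with
    | zero => simp
    | add m₁ m₂ h₁ h₂ =>
      rw [map_add, single_add, add_sub_add_comm]
      exact add_mem h₁ h₂
    | single x r => simpa using hsingle x r
  simpa [LinearMap.mem_ker.mp hm] using hmod m

end PushDifference

section PermutationModule

attribute [local instance] Finsupp.comapDistribMulAction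

variable {G X : Type*} [Group G] [MulAction G X]

instance Finsupp.comapSMulCommClass (R : Type*) [Semiring R] :
    SMulCommClass G R (X →₀ R) where
  smul_comm g r m := by rw [comapSMul_def, comapSMul_def, mapDomain_smul]

theorem isOpen_stabilizer_finsupp [TopologicalSpace G] [SeparatelyContinuousMul G] {M : Type*}
    [AddCommMonoid M] (hX : ∀ x : X, IsOpen (stabilizer G x : Set G)) (m : X →₀ M) :
    IsOpen (stabilizer G m : Set G) := by
  induction m using Finsupp.induction_linear with
  | zero => exact Subgroup.isOpen_mono (H₁ := ⊤) (fun g _ => smul_zero g) isOpen_univ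
  | add m₁ m₂ h₁ h₂ =>
    refine Subgroup.isOpen_mono (H₁ := _ ⊓ _) (fun g hg => ?_) (h₁.inter h₂)
    rw [mem_stabilizer_iff, smul_add, hg.1, hg.2]
  | single x r =>
    refine Subgroup.isOpen_mono (fun g hg => ?_) (hX x)
    rw [mem_stabilizer_iff, comapSMul_single, mem_stabilizer_iff.mp hg]

theorem augmentation_comapSMul (R : Type*) [Ring R] (g : G) (m : X →₀ R) :
    augmentation R X (g • m) = augmentation R X m :=
  augmentation_mapDomain _ m

theorem pushDiff_comapSMul {R : Type*} [Ring R] {f : X → X}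
    (hf : ∀ (g : G) x, f (g • x) = g • f x) (g : G) (m : X →₀ R) :
    pushDiff R f (g • m) = g • pushDiff R f m := by
  have hcomm : (f ∘ (g • ·)) = (g • ·) ∘ f := funext (hf g)
  rw [pushDiff_apply, pushDiff_apply, smul_sub, comapSMul_def, comapSMul_def,
    ← mapDomain_comp, ← mapDomain_comp, hcomm]

theorem linearCombination_comapSMul {R M : Type*} [Semiring R] [AddCommMonoid M] [Module R M]
    [DistribMulAction G M] [SMulCommClass G R M] {f : X → M}
    (hf : ∀ (g : G) x, f (g • x) = g • f x) (g : G) (m : X →₀ R) :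
    linearCombination R f (g • m) = g • linearCombination R f m := by
  induction m using Finsupp.induction_linear with
  | zero => simp
  | add m₁ m₂ h₁ h₂ => rw [smul_add, map_add, map_add, h₁, h₂, smul_add]
  | single x r =>
    rw [comapSMul_single, linearCombination_single, linearCombination_single, hf, smul_comm g r]

variable {G : Type u} [Group G] [TopologicalSpace G] [IsTopologicalGroup G]

noncomputable def DiscGMod.permutation (X : Type u) [MulAction G X]
    (hX : ∀ x : X, IsOpen (stabilizer G x : Set G)) : DiscGMod G where
  carrier := X →₀ ℚ
  discrete := isOpen_stabilizer_finsupp hX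

theorem projOverDiscrete_finsupp {X : Type u} [MulAction G X]
    (hX : ∀ x : X, IsCompact (stabilizer G x : Set G)) :
    ProjOverDiscrete G (X →₀ ℚ) (fun g m => g • m) := by
  intro A B π hπ hsurj φ hφ
  beta_reduce at hφ
  obtain ⟨f, hfπ, hf⟩ := exists_equivariant_of_forall_exists
    (fun x b => π b = φ (single x 1))
    (fun g x b h => by rw [hπ, h, ← hφ, comapSMul_single])
    fun x => by
      obtain ⟨b, hb, hfix⟩ := DiscGMod.exists_fixed_preimage (hX x) hπ hsurj
        (a := φ (single x 1)) fun u hu => by rw [← hφ, comapSMul_single, mem_stabilizer_iff.mp hu]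
      exact ⟨b, hb, fun u hu => hfix u hu⟩
  refine ⟨linearCombination ℚ f, linearCombination_comapSMul hf, lhom_ext fun x r => ?_⟩
  rw [LinearMap.comp_apply, linearCombination_single, map_smul, hfπ, ← map_smul, smul_single_one]

end PermutationModule

theorem MulAction.stabilizer_sigma_mk {G ι : Type*} {α : ι → Type*} [Group G]
    [∀ i, MulAction G (α i)] (i : ι) (a : α i) :
    stabilizer G (⟨i, a⟩ : Σ i, α i) = stabilizer G a := by
  ext g
  simp [mem_stabilizer_iff, Sigma.smul_mk]

section QuotientStabilizer

variable {G : Type*} [Group G] [TopologicalSpace G]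

theorem isOpen_stabilizer_quotient [IsTopologicalGroup G] {H : Subgroup G}
    (hH : IsOpen (H : Set G)) (q : G ⧸ H) : IsOpen (stabilizer G q : Set G) :=
  have := QuotientGroup.discreteTopology hH
  stabilizer_isOpen G q

theorem isCompact_stabilizer_quotient [SeparatelyContinuousMul G] {H : Subgroup G}
    (hH : IsCompact (H : Set G)) (q : G ⧸ H) : IsCompact (stabilizer G q : Set G) := by
  induction q using QuotientGroup.induction_on with
  | H g =>
    have hq : (g : G ⧸ H) = g • ((1 : G) : G ⧸ H) := by simp
    rw [hq, stabilizer_smul_eq_stabilizer_map_conj, stabilizer_quotient, Subgroup.coe_map]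
    exact hH.image (IsTopologicalGroup.continuous_conj g)

end QuotientStabilizer

section NestedVertex

variable {G : Type*} [Group G] (O : ℕ → Subgroup G)

abbrev NestedVertex : Type _ := Σ k, G ⧸ O k

variable {O} (hmono : ∀ k, O k ≤ O (k + 1))

def NestedVertex.push (v : NestedVertex O) : NestedVertex O :=
  ⟨v.1 + 1, Subgroup.quotientMapOfLE (hmono v.1) v.2⟩

theorem NestedVertex.push_mk (k : ℕ) (g : G) :
    push hmono ⟨k, (g : G ⧸ O k)⟩ = ⟨k + 1, (g : G ⧸ O (k + 1))⟩ := rfl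

theorem NestedVertex.push_smul (g : G) (v : NestedVertex O) :
    push hmono (g • v) = g • push hmono v := by
  obtain ⟨k, q⟩ := v
  induction q using QuotientGroup.induction_on with
  | H h => rfl

theorem NestedVertex.push_iterate_mk (k n : ℕ) (g : G) :
    (push hmono)^[n] ⟨k, (g : G ⧸ O k)⟩ = ⟨k + n, (g : G ⧸ O (k + n))⟩ := by
  induction n with
  | zero => rfl
  | succ n ih => rw [Function.iterate_succ_apply', ih, push_mk, add_assoc]

theorem NestedVertex.mk_eq_mk {k l : ℕ} (hkl : k = l) {g h : G} (hgh : g⁻¹ * h ∈ O k) :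
    (⟨k, (g : G ⧸ O k)⟩ : NestedVertex O) = ⟨l, (h : G ⧸ O l)⟩ := by
  subst hkl
  rw [QuotientGroup.eq.mpr hgh]

theorem NestedVertex.exists_push_iterate_eq (hunion : ∀ g : G, ∃ k, g ∈ O k)
    (v w : NestedVertex O) : ∃ m n, (push hmono)^[m] v = (push hmono)^[n] w := by
  obtain ⟨k, p⟩ := v
  obtain ⟨l, q⟩ := w
  induction p using QuotientGroup.induction_on with | H g =>
  induction q using QuotientGroup.induction_on with | H h =>
  obtain ⟨i, hi⟩ := hunion (g⁻¹ * h)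
  refine ⟨l + i, k + i, ?_⟩
  rw [push_iterate_mk, push_iterate_mk]
  exact mk_eq_mk (by omega) (monotone_nat_of_le_succ hmono (by omega : i ≤ k + (l + i)) hi)

end NestedVertex

theorem nested_cd_le_one_general (G : Type u) [Group G] [TopologicalSpace G]
    [IsTopologicalGroup G]
    (O : ℕ → Subgroup G)
    (hmono : ∀ k, O k ≤ O (k + 1))
    (hopen : ∀ k, IsOpen ((O k : Set G)))
    (hcpt : ∀ k, IsCompact ((O k : Set G)))
    (hunion : ∀ g : G, ∃ k, g ∈ O k) :
    ∃ (P₀ P₁ : DiscGMod G) (d : P₁.carrier →ₗ[ℚ] P₀.carrier)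
      (ε : P₀.carrier →ₗ[ℚ] ℚ),
      DiscGMod.Equivariant d ∧ (∀ (g : G) (x : P₀.carrier), ε (g • x) = ε x) ∧
      Function.Injective d ∧ LinearMap.range d = LinearMap.ker ε ∧
      Function.Surjective ε ∧
      P₀.IsProjectiveObj ∧ P₁.IsProjectiveObj := by
  have hstabOpen : ∀ v : NestedVertex O, IsOpen (stabilizer G v : Set G) := fun ⟨k, q⟩ => by
    rw [stabilizer_sigma_mk]
    exact isOpen_stabilizer_quotient (hopen k) q
  have hstabCpt : ∀ v : NestedVertex O, IsCompact (stabilizer G v : Set G) := fun ⟨k, q⟩ => by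
    rw [stabilizer_sigma_mk]
    exact isCompact_stabilizer_quotient (hcpt k) q
  have : Nonempty (NestedVertex O) := ⟨⟨0, (1 : G)⟩⟩
  let P := DiscGMod.permutation (NestedVertex O) hstabOpen
  exact ⟨P, P, pushDiff ℚ (NestedVertex.push hmono), augmentation ℚ _,
    pushDiff_comapSMul (NestedVertex.push_smul hmono), augmentation_comapSMul ℚ,
    pushDiff_injective Sigma.fst fun _ => rfl,
    range_pushDiff (NestedVertex.exists_push_iterate_eq hmono hunion),
    augmentation_surjective, projOverDiscrete_finsupp hstabCpt, projOverDiscrete_finsupp hstabCpt⟩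

/-- Let `G` be a nested t.d.l.c. group, i.e. the union of a
countable increasing chain of compact open subgroups.  Then `cd_ℚ(G) ≤ 1`: the
trivial discrete `ℚ[G]`-module `ℚ` admits a projective resolution
`0 → P₁ → P₀ → ℚ → 0` of length `1` in the category of discrete `ℚ[G]`-modules. -/
theorem nested_cd_le_one (G : Type u) [Group G] [TopologicalSpace G]
    [IsTopologicalGroup G] [TotallyDisconnectedSpace G] [LocallyCompactSpace G]
    (O : ℕ → Subgroup G)
    (hmono : ∀ k, O k ≤ O (k + 1))
    (hopen : ∀ k, IsOpen ((O k : Set G)))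
    (hcpt : ∀ k, IsCompact ((O k : Set G)))
    (hunion : ∀ g : G, ∃ k, g ∈ O k) :
    ∃ (P₀ P₁ : DiscGMod G) (d : P₁.carrier →ₗ[ℚ] P₀.carrier)
      (ε : P₀.carrier →ₗ[ℚ] ℚ),
      DiscGMod.Equivariant d ∧ (∀ (g : G) (x : P₀.carrier), ε (g • x) = ε x) ∧
      Function.Injective d ∧ LinearMap.range d = LinearMap.ker ε ∧
      Function.Surjective ε ∧
      P₀.IsProjectiveObj ∧ P₁.IsProjectiveObj :=
  nested_cd_le_one_general G O hmono hopen hcpt hunion
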